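/- The trace compile function C^t, applying C^s state-by-state, is well-defined: if τ ∈ T_GP(S) is a trace of statement S under →_B, then C^t(τ) is a trace of the compiled program C(S) starting from its initial label, i.e., C^t(τ) ∈ T^ι(C(S)). -/

import Mathlib

/-- Guo–Palsberg statements: sequences of commands in continuation style. -/
inductive Stm (Exp BExp : Type) : Type
  | nil : Stm Exp BExp
  | skipC : Stm Exp BExp → Stm Exp BExp
  | assign : String → Exp → Stm Exp BExp → Stm Exp BExp
  | ite : BExp → Stm Exp BExp → Stm Exp BExp → Stm Exp BExp
  | whileC : BExp → Stm Exp BExp → Stm Exp BExp → Stm Exp BExp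
  | bail : BExp → Stm Exp BExp → Stm Exp BExp → Stm Exp BExp

/-- Concatenation of statements. -/
def Stm.app {Exp BExp : Type} : Stm Exp BExp → Stm Exp BExp → Stm Exp BExp
  | .nil, K => K
  | .skipC K', K => .skipC (K'.app K)
  | .assign x e K', K => .assign x e (K'.app K)
  | .ite b S K', K => .ite b S (K'.app K)
  | .whileC b S K', K => .whileC b S (K'.app K)
  | .bail b S K', K => .bail b S (K'.app K)

/-- The deterministic small-step operational semantics →_B of Guo–Palsberg. -/
inductive StepB {Val Exp BExp : Type} (eval : Exp → (String → Val) → Val)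
    (beval : BExp → (String → Val) → Bool) :
    (String → Val) × Stm Exp BExp → (String → Val) × Stm Exp BExp → Prop
  | skip (ρ : String → Val) (K : Stm Exp BExp) :
      StepB eval beval (ρ, .skipC K) (ρ, K)
  | assign (ρ : String → Val) (x : String) (e : Exp) (K : Stm Exp BExp) :
      StepB eval beval (ρ, .assign x e K) (Function.update ρ x (eval e ρ), K)
  | iteT (ρ : String → Val) (b : BExp) (S K : Stm Exp BExp) :
      beval b ρ = true → StepB eval beval (ρ, .ite b S K) (ρ, S.app K)
  | iteF (ρ : String → Val) (b : BExp) (S K : Stm Exp BExp) :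
      beval b ρ = false → StepB eval beval (ρ, .ite b S K) (ρ, K)
  | whileU (ρ : String → Val) (b : BExp) (S K : Stm Exp BExp) :
      StepB eval beval (ρ, .whileC b S K)
        (ρ, .ite b (S.app (.whileC b S .nil)) K)
  | bailT (ρ : String → Val) (b : BExp) (S K : Stm Exp BExp) :
      beval b ρ = true → StepB eval beval (ρ, .bail b S K) (ρ, S)
  | bailF (ρ : String → Val) (b : BExp) (S K : Stm Exp BExp) :
      beval b ρ = false → StepB eval beval (ρ, .bail b S K) (ρ, K)

/-- Actions of the labeled-command target language. -/
inductive Act (Exp BExp : Type) : Type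
  | skipA : Act Exp BExp
  | assignA : String → Exp → Act Exp BExp
  | testA : BExp → Bool → Act Exp BExp

/-- Labeled commands L : A → L'; labels are statements (via the injective
labeling l = id), with none playing the role of the undefined label ⊥. -/
structure Cmd (Exp BExp : Type) : Type where
  lbl : Stm Exp BExp
  act : Act Exp BExp
  suc : Option (Stm Exp BExp)

/-- Action semantics. -/
def Asem {Val Exp BExp : Type} (eval : Exp → (String → Val) → Val)
    (beval : BExp → (String → Val) → Bool) :
    Act Exp BExp → (String → Val) → Option (String → Val)
  | .skipA, ρ => some ρ
  | .assignA x e, ρ => some (Function.update ρ x (eval e ρ))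
  | .testA b pos, ρ => if beval b ρ = pos then some ρ else none

/-- The (generic) transition semantics of the labeled-command language. -/
def Strans {Val Exp BExp : Type} (eval : Exp → (String → Val) → Val)
    (beval : BExp → (String → Val) → Bool)
    (s s' : ((String → Val) × Cmd Exp BExp)) : Prop :=
  Asem eval beval s.2.act s.1 = some s'.1 ∧ s.2.suc = some s'.2.lbl

/-- The state compile function C^s, translating GP states to labeled-command
states (conditionals resolved by the truth value of the guard in the store). -/
def Cs {Val Exp BExp : Type} (eval : Exp → (String → Val) → Val)
    (beval : BExp → (String → Val) → Bool) :
    (String → Val) × Stm Exp BExp → (String → Val) × Cmd Exp BExp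
  | (ρ, .nil) => (ρ, ⟨.nil, .skipA, none⟩)
  | (ρ, .skipC K) => (ρ, ⟨.skipC K, .skipA, some K⟩)
  | (ρ, .assign x e K) => (ρ, ⟨.assign x e K, .assignA x e, some K⟩)
  | (ρ, .ite b S K) =>
      if beval b ρ then (ρ, ⟨.ite b S K, .testA b true, some (S.app K)⟩)
      else (ρ, ⟨.ite b S K, .testA b false, some K⟩)
  | (ρ, .whileC b S K) =>
      (ρ, ⟨.whileC b S K, .skipA, some (.ite b (S.app (.whileC b S .nil)) K)⟩)
  | (ρ, .bail b S K) =>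
      if beval b ρ then (ρ, ⟨.bail b S K, .testA b true, some S⟩)
      else (ρ, ⟨.bail b S K, .testA b false, some K⟩)

/-- The "first command(s)" compilation function 𝖢. -/
def CC {Exp BExp : Type} : Stm Exp BExp → Set (Cmd Exp BExp)
  | .nil => {⟨.nil, .skipA, none⟩}
  | .skipC K => {⟨.skipC K, .skipA, some K⟩}
  | .assign x e K => {⟨.assign x e K, .assignA x e, some K⟩}
  | .ite b S K =>
      {⟨.ite b S K, .testA b true, some (S.app K)⟩,
       ⟨.ite b S K, .testA b false, some K⟩}
  | .whileC b S K =>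
      {⟨.whileC b S K, .skipA, some (.ite b (S.app (.whileC b S .nil)) K)⟩}
  | .bail b S K =>
      {⟨.bail b S K, .testA b true, some S⟩,
       ⟨.bail b S K, .testA b false, some K⟩}

/-- The successor-statement relation underlying the recursive definition of the
full compilation function 𝒞. -/
inductive SuccStm {Exp BExp : Type} : Stm Exp BExp → Stm Exp BExp → Prop
  | skip (K : Stm Exp BExp) : SuccStm (.skipC K) K
  | assign (x : String) (e : Exp) (K : Stm Exp BExp) : SuccStm (.assign x e K) K
  | iteThen (b : BExp) (S K : Stm Exp BExp) : SuccStm (.ite b S K) (S.app K)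
  | iteElse (b : BExp) (S K : Stm Exp BExp) : SuccStm (.ite b S K) K
  | whileU (b : BExp) (S K : Stm Exp BExp) :
      SuccStm (.whileC b S K) (.ite b (S.app (.whileC b S .nil)) K)
  | bailTo (b : BExp) (S K : Stm Exp BExp) : SuccStm (.bail b S K) S
  | bailElse (b : BExp) (S K : Stm Exp BExp) : SuccStm (.bail b S K) K

/-- The full compilation function 𝒞: all first commands of statements reachable
through the recursive calls. -/
def compile {Exp BExp : Type} (S : Stm Exp BExp) : Set (Cmd Exp BExp) :=
  ⋃ S' ∈ {S' | Relation.ReflTransGen SuccStm S S'}, CC S'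

/-- T_GP(S): partial traces of S under →_B, starting at ⟨ρ,S⟩ for any store ρ. -/
def TGP {Val Exp BExp : Type} (eval : Exp → (String → Val) → Val)
    (beval : BExp → (String → Val) → Bool) (S : Stm Exp BExp) :
    Set (List ((String → Val) × Stm Exp BExp)) :=
  {τ | τ ≠ [] ∧ (∃ ρ : String → Val, τ.head? = some (ρ, S)) ∧
    τ.Chain' (StepB eval beval)}

/-- T^ι(P) at initial label L: partial traces of the program P ⊆ Cmd starting
at a state whose command is labeled L. -/
def Tiota {Val Exp BExp : Type} (eval : Exp → (String → Val) → Val)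
    (beval : BExp → (String → Val) → Bool) (P : Set (Cmd Exp BExp))
    (L : Stm Exp BExp) : Set (List ((String → Val) × Cmd Exp BExp)) :=
  {τ | τ ≠ [] ∧ (∀ s ∈ τ, s.2 ∈ P) ∧
    (∃ (ρ : String → Val) (C : Cmd Exp BExp), τ.head? = some (ρ, C) ∧ C.lbl = L) ∧
    τ.Chain' (Strans eval beval)}

/-! `C^s` keeps the store and labels each command by the statement it compiles, so a
`→_B` step is simulated by one transition of the compiled commands; moreover every statement
met along a trace is a `SuccStm`-descendant of `S`, hence its first commands lie in `𝒞(S)`. -/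

section TraceCompile

variable {Val Exp BExp : Type} (eval : Exp → (String → Val) → Val)
    (beval : BExp → (String → Val) → Bool)

theorem StepB.succStm {s s' : (String → Val) × Stm Exp BExp} (h : StepB eval beval s s') :
    SuccStm s.2 s'.2 := by
  cases h <;> constructor

theorem Cs_fst (s : (String → Val) × Stm Exp BExp) : (Cs eval beval s).1 = s.1 := by
  obtain ⟨ρ, S⟩ := s
  cases S <;> simp only [Cs] <;> split <;> rfl

theorem Cs_lbl (s : (String → Val) × Stm Exp BExp) : (Cs eval beval s).2.lbl = s.2 := by
  obtain ⟨ρ, S⟩ := s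
  cases S <;> simp only [Cs] <;> split <;> rfl

theorem Cs_mem_CC (s : (String → Val) × Stm Exp BExp) : (Cs eval beval s).2 ∈ CC s.2 := by
  obtain ⟨ρ, S⟩ := s
  cases S <;> simp only [Cs, CC] <;> first | rfl | (split <;> simp)

theorem Cs_mem_compile {S : Stm Exp BExp} {s : (String → Val) × Stm Exp BExp}
    (h : Relation.ReflTransGen SuccStm S s.2) : (Cs eval beval s).2 ∈ compile S :=
  Set.mem_biUnion h (Cs_mem_CC eval beval s)

theorem StepB.strans_Cs {s s' : (String → Val) × Stm Exp BExp} (h : StepB eval beval s s') :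
    Strans eval beval (Cs eval beval s) (Cs eval beval s') := by
  refine ⟨?_, ?_⟩
  · rw [Cs_fst, Cs_fst]
    cases h <;> simp [Cs, Asem, *]
  · rw [Cs_lbl]
    cases h <;> simp [Cs, *]

theorem reflTransGen_succStm_of_mem_of_isChain {τ : List ((String → Val) × Stm Exp BExp)}
    {ρ : String → Val} {S : Stm Exp BExp} (hchain : τ.IsChain (StepB eval beval))
    (hhead : τ.head? = some (ρ, S)) :
    ∀ s ∈ τ, Relation.ReflTransGen SuccStm S s.2 :=
  hchain.induction _ τ (fun _ _ hstep hS => hS.tail hstep.succStm)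
    fun hne => by
      rw [List.head?_eq_some_head hne, Option.some_inj] at hhead
      exact hhead ▸ .refl

end TraceCompile

/-- The trace compile function C^t (applying C^s state-by-state) is
well-defined: it maps traces of S into traces of the compiled program 𝒞(S)
starting at its initial label. -/
theorem trace_compile_well_defined {Val Exp BExp : Type}
    (eval : Exp → (String → Val) → Val) (beval : BExp → (String → Val) → Bool)
    (S : Stm Exp BExp) (τ : List ((String → Val) × Stm Exp BExp))
    (hτ : τ ∈ TGP eval beval S) :
    τ.map (Cs eval beval) ∈ Tiota eval beval (compile S) S := by
  obtain ⟨hne, ⟨ρ, hhead⟩, hchain⟩ := hτ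
  refine ⟨by simpa using hne, ?_, ?_, ?_⟩
  · simp only [List.mem_map]
    rintro _ ⟨s, hs, rfl⟩
    exact Cs_mem_compile eval beval
      (reflTransGen_succStm_of_mem_of_isChain eval beval hchain hhead s hs)
  · exact ⟨_, _, by simp [hhead]; rfl, Cs_lbl eval beval (ρ, S)⟩
  · exact List.isChain_map _ |>.2 (hchain.imp fun _ _ => StepB.strans_Cs eval beval)
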